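/- arXiv:1807.00268 — 9 statements merged into one kernel-verified Lean document; each statement's English description precedes it below -/
import Mathlib

section
/- In any semi-Heyting algebra L, the lattice reduct is distributive. -/
class SemiHeyting (α : Type*) extends Lattice α, BoundedOrder α where
  himp : α → α → α
  sh1 : ∀ x y : α, x ⊓ himp x y = x ⊓ y
  sh2 : ∀ x y z : α, x ⊓ himp y z = x ⊓ himp (x ⊓ y) (x ⊓ z)
  sh3 : ∀ x : α, himp x x = ⊤

namespace SemiHeyting

variable {α : Type*} [SemiHeyting α]

def star (x : α) : α := himp x ⊥

end SemiHeyting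

class DQD (α : Type*) extends SemiHeyting α where
  prime : α → α
  prime_bot : prime ⊥ = ⊤
  prime_top : prime ⊤ = ⊥
  prime_inf : ∀ x y : α, prime (x ⊓ y) = prime x ⊔ prime y
  prime_prime_sup : ∀ x y : α, prime (prime (x ⊔ y)) = prime (prime x) ⊔ prime (prime y)
  prime_prime_le : ∀ x : α, prime (prime x) ≤ x

class DmsSt (α : Type*) extends DQD α where
  stone : ∀ x : α, SemiHeyting.star x ⊔ SemiHeyting.star (SemiHeyting.star x) = ⊤
  jdm : ∀ x y : α, prime (x ⊔ y) = prime x ⊓ prime y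

open SemiHeyting DQD

/-! The element `himp a (a ⊓ c)` is a relative pseudocomplement of `a` with respect to `c`, and
a lattice in which all relative pseudocomplements exist is distributive: both `a ⊓ y ≤ t` and
`a ⊓ z ≤ t` give `y ⊔ z ≤ himp a (a ⊓ t)`, hence `a ⊓ (y ⊔ z) ≤ t`. -/

namespace SemiHeyting

variable {α : Type*} [SemiHeyting α]

theorem le_himp_inf_of_inf_le {a b c : α} (h : a ⊓ b ≤ c) : b ≤ himp a (a ⊓ c) := by
  have hb : b ⊓ (a ⊓ c) = b ⊓ a :=
    le_antisymm (inf_le_inf_left b inf_le_left)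
      (le_inf inf_le_left (le_inf inf_le_right (inf_comm b a ▸ h)))
  calc b = b ⊓ himp (b ⊓ a) (b ⊓ a) := by rw [sh3, inf_top_eq]
    _ = b ⊓ himp a (a ⊓ c) := by rw [sh2 b a (a ⊓ c), hb]
    _ ≤ himp a (a ⊓ c) := inf_le_right

theorem inf_le_iff_le_himp_inf {a b c : α} : a ⊓ b ≤ c ↔ b ≤ himp a (a ⊓ c) := by
  refine ⟨le_himp_inf_of_inf_le, fun h => ?_⟩
  calc a ⊓ b ≤ a ⊓ himp a (a ⊓ c) := inf_le_inf_left a h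
    _ = a ⊓ c := by rw [sh1, ← inf_assoc, inf_idem]
    _ ≤ c := inf_le_right

end SemiHeyting

theorem stmt0 {α : Type*} [SemiHeyting α] :
    ∀ x y z : α, x ⊓ (y ⊔ z) = (x ⊓ y) ⊔ (x ⊓ z) := by
  intro x y z
  refine le_antisymm ?_ le_inf_sup
  rw [inf_le_iff_le_himp_inf]
  exact sup_le (inf_le_iff_le_himp_inf.mp le_sup_left) (inf_le_iff_le_himp_inf.mp le_sup_right)
end

section
/- In any DQD-algebra L, (x ∧ y)′* = x′* ∧ y′* for all x, y. -/
open SemiHeyting DQD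

/-! `star` is a pseudocomplement: `z ≤ a*` iff `z ⊓ a = ⊥`. So `z ≤ a*` iff `a ≤ z*`, a Galois
connection, which makes `*` antitone and turn joins into meets without any
distributivity. Since `′` turns meets into joins, `(x ⊓ y)′* = (x′ ⊔ y′)* = x′* ⊓ y′*`. -/

namespace SemiHeyting

variable {α : Type*} [SemiHeyting α]

theorem inf_star_self (a : α) : a ⊓ star a = ⊥ := by
  simpa only [star, inf_bot_eq] using sh1 a ⊥

theorem le_star_iff {z a : α} : z ≤ star a ↔ z ⊓ a = ⊥ := by
  constructor
  · intro h
    refine le_bot_iff.mp ?_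
    calc z ⊓ a ≤ star a ⊓ a := inf_le_inf_right a h
      _ = ⊥ := by rw [inf_comm, inf_star_self]
  · intro h
    have h₂ := sh2 z a ⊥
    rw [h, inf_bot_eq, sh3, inf_top_eq] at h₂
    exact inf_eq_left.mp h₂

theorem le_star_comm {z a : α} : z ≤ star a ↔ a ≤ star z := by
  rw [le_star_iff, le_star_iff, inf_comm]

theorem star_antitone : Antitone (star : α → α) := fun _ _ hab =>
  le_star_comm.mpr (hab.trans (le_star_comm.mp le_rfl))

theorem star_sup (a b : α) : star (a ⊔ b) = star a ⊓ star b := by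
  refine le_antisymm (le_inf (star_antitone le_sup_left) (star_antitone le_sup_right)) ?_
  exact le_star_comm.mpr (sup_le (le_star_comm.mp inf_le_left) (le_star_comm.mp inf_le_right))

end SemiHeyting

theorem stmt4 {α : Type*} [DQD α] (x y : α) :
    SemiHeyting.star (DQD.prime (x ⊓ y)) = SemiHeyting.star (DQD.prime x) ⊓ SemiHeyting.star (DQD.prime y) := by
  rw [DQD.prime_inf, SemiHeyting.star_sup]
end

section
/- In any DQD-algebra L, x‴ = x′ for all x. -/
open SemiHeyting DQD

namespace DQD

variable {α : Type*} [DQD α]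

theorem prime_antitone : Antitone (prime : α → α) := fun x y hxy => by
  calc prime y ≤ prime x ⊔ prime y := le_sup_right
    _ = prime x := by rw [← prime_inf, inf_eq_left.mpr hxy]

end DQD

theorem stmt5 {α : Type*} [DQD α] (x : α) :
    DQD.prime (DQD.prime (DQD.prime x)) = DQD.prime x :=
  le_antisymm (prime_prime_le (prime x)) (prime_antitone (prime_prime_le x))
end

section
/- In any DQD-algebra L, x ∨ x⁺ = 1 for all x, where x⁺ := x′*′. -/
open SemiHeyting DQD

theorem SemiHeyting.inf_star_self_s6 {α : Type*} [SemiHeyting α] (x : α) : x ⊓ star x = ⊥ := by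
  rw [star, sh1, inf_bot_eq]

theorem DQD.prime_sup_prime_eq_top_of_inf_eq_bot {α : Type*} [DQD α] {x y : α}
    (h : x ⊓ y = ⊥) : prime x ⊔ prime y = ⊤ := by
  rw [← prime_inf, h, prime_bot]

theorem stmt6 {α : Type*} [DQD α] (x : α) :
    x ⊔ DQD.prime (SemiHeyting.star (DQD.prime x)) = ⊤ := by
  have h : prime (prime x) ⊔ prime (star (prime x)) = ⊤ :=
    prime_sup_prime_eq_top_of_inf_eq_bot (inf_star_self_s6 (prime x))
  rw [eq_top_iff, ← h]
  exact sup_le_sup_right (prime_prime_le x) _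
end

section
/- Let L be a De Morgan semi-Heyting algebra of level 1, i.e., a DQD-algebra satisfying x″ = x and x ∧ x′* = (x ∧ x′*)′*. Then for all x in L, x*′ ∧ x′ ∧ x* = 0. -/
open SemiHeyting DQD

/-! Level 1 at `x′`, together with `x″ = x`, gives `x′ ∧ x* = (x ∨ x*′)*`; and in any
semi-Heyting algebra `a ≤ b` forces `a ∧ b* = 0`, here with `a = x*′`. -/

theorem SemiHeyting.inf_star_eq_bot_of_le {α : Type*} [SemiHeyting α] {a b : α} (h : a ≤ b) :
    a ⊓ star b = ⊥ := by
  rw [star, sh2, inf_eq_left.mpr h, inf_bot_eq, sh1, inf_bot_eq]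

theorem stmt7 {α : Type*} [DQD α]
    (hdm : ∀ x : α, DQD.prime (DQD.prime x) = x)
    (hlev : ∀ x : α, x ⊓ SemiHeyting.star (DQD.prime x)
      = SemiHeyting.star (DQD.prime (x ⊓ SemiHeyting.star (DQD.prime x))))
    (x : α) :
    DQD.prime (SemiHeyting.star x) ⊓ DQD.prime x ⊓ SemiHeyting.star x = ⊥ := by
  have level_at_prime : prime x ⊓ star x = star (x ⊔ prime (star x)) := by
    simpa only [hdm x, prime_inf] using hlev (prime x)
  rw [inf_assoc, level_at_prime]
  exact inf_star_eq_bot_of_le le_sup_right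
end

section
/- Let L be a dually ms Stone semi-Heyting algebra (DmsSt-algebra). Then for all x in L, x*′* ≤ x′. -/
open SemiHeyting DQD

/-! Every semi-Heyting algebra is distributive, and in a distributive lattice
`a ⊓ b = ⊥` and `b ⊔ c = ⊤` give `a ≤ c`. Take `a = x*′*`, `b = x*′`, `c = x′`: the first
equation holds since `y* ⊓ y = ⊥`, the second since `x*′ ⊔ x′ = (x* ⊓ x)′ = ⊥′ = ⊤`. -/

namespace SemiHeyting

variable {α : Type*} [SemiHeyting α]

theorem le_himp_inf_iff {a b c : α} : b ≤ himp a (a ⊓ c) ↔ a ⊓ b ≤ c := by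
  constructor
  · intro h
    calc a ⊓ b = a ⊓ himp a (a ⊓ c) ⊓ b := by rw [inf_assoc, inf_eq_right.2 h]
      _ = a ⊓ c ⊓ b := by rw [sh1, ← inf_assoc, inf_idem]
      _ ≤ c := inf_le_left.trans inf_le_right
  · intro h
    have hb : b ⊓ a = b ⊓ (a ⊓ c) := by
      rw [← inf_assoc, eq_comm, inf_eq_left, inf_comm]
      exact h
    calc b = b ⊓ himp (b ⊓ a) (b ⊓ (a ⊓ c)) := by rw [hb, sh3, inf_top_eq]
      _ = b ⊓ himp a (a ⊓ c) := (sh2 b a (a ⊓ c)).symm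
      _ ≤ himp a (a ⊓ c) := inf_le_right

theorem inf_sup_le (a b c : α) : a ⊓ (b ⊔ c) ≤ a ⊓ b ⊔ a ⊓ c :=
  le_himp_inf_iff.1 <| sup_le (le_himp_inf_iff.2 le_sup_left) (le_himp_inf_iff.2 le_sup_right)

instance toDistribLattice : DistribLattice α :=
  DistribLattice.ofInfSupLe inf_sup_le

theorem disjoint_star_self (x : α) : Disjoint (star x) x :=
  disjoint_iff.2 <| by rw [inf_comm, star, sh1, inf_bot_eq]

end SemiHeyting

namespace DQD

variable {α : Type*} [DQD α]

theorem codisjoint_prime_star_prime (x : α) : Codisjoint (prime (star x)) (prime x) :=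
  codisjoint_iff.2 <| by rw [← prime_inf, (disjoint_star_self x).eq_bot, prime_bot]

theorem star_prime_star_le_prime (x : α) : star (prime (star x)) ≤ prime x :=
  (disjoint_star_self _).le_of_codisjoint (codisjoint_prime_star_prime x)

end DQD

theorem stmt9 {α : Type*} [DmsSt α] (x : α) :
    SemiHeyting.star (DQD.prime (SemiHeyting.star x)) ≤ DQD.prime x :=
  DQD.star_prime_star_le_prime x
end

section
/- Let L be a dually ms Stone semi-Heyting algebra. Then for all x in L, x′ ∨ x*′** = 1. -/
open SemiHeyting DQD

namespace SemiHeyting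

variable {α : Type*} [SemiHeyting α]

theorem le_star_star (a : α) : a ≤ star (star a) := by
  have h := sh2 a (star a) ⊥
  rw [inf_star_self, inf_bot_eq, sh3, inf_top_eq] at h
  exact inf_eq_left.mp h

end SemiHeyting

theorem DQD.prime_sup_prime_star {α : Type*} [DQD α] (a : α) : prime a ⊔ prime (star a) = ⊤ := by
  rw [← prime_inf, inf_star_self, prime_bot]

theorem stmt10 {α : Type*} [DmsSt α] (x : α) :
    DQD.prime x ⊔ SemiHeyting.star (SemiHeyting.star (DQD.prime (SemiHeyting.star x))) = ⊤ :=
  top_le_iff.mp <| prime_sup_prime_star x ▸ sup_le_sup_left (le_star_star _) _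
end

section
/- Let L be a dually ms Stone semi-Heyting algebra. Then for all x in L, x*′ ≤ x**′*. -/
open SemiHeyting DQD

theorem SemiHeyting.le_star_of_inf_eq_bot {α : Type*} [SemiHeyting α] {a b : α}
    (h : a ⊓ b = ⊥) : a ≤ star b := by
  rw [← inf_eq_left]
  calc a ⊓ star b = a ⊓ himp (a ⊓ b) (a ⊓ ⊥) := sh2 a b ⊥
    _ = a := by rw [h, inf_bot_eq, sh3, inf_top_eq]

theorem DmsSt.prime_star_inf_prime_star_star_eq_bot {α : Type*} [DmsSt α] (x : α) :
    prime (star x) ⊓ prime (star (star x)) = ⊥ := by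
  rw [← DmsSt.jdm, DmsSt.stone, prime_top]

theorem stmt11 {α : Type*} [DmsSt α] (x : α) :
    DQD.prime (SemiHeyting.star x)
      ≤ SemiHeyting.star (DQD.prime (SemiHeyting.star (SemiHeyting.star x))) :=
  le_star_of_inf_eq_bot (DmsSt.prime_star_inf_prime_star_star_eq_bot x)
end

section
/- Let L be a dually ms Stone semi-Heyting algebra. Then for all x in L, x*″ ≤ x′*′. -/
open SemiHeyting DQD

/-
The dual pseudocomplement inverts ∧ into ∨, so x′ ∨ x*′ = (x ∧ x*)′ = 0′ = 1, while x′* ∧ x′ = 0.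
The lattice reduct of a semi-Heyting algebra is distributive, hence x′* ≤ x*′, and applying the
antitone map ′ gives the claim.
-/

namespace SemiHeyting

variable {α : Type*} [SemiHeyting α]

theorem le_himp_of_inf_le {a u d : α} (hua : u ≤ a) (hd : a ⊓ d ≤ u) : d ≤ himp a u := by
  have hdu : d ⊓ u = d ⊓ a :=
    le_antisymm (inf_le_inf_left d hua) (le_inf inf_le_left (inf_comm a d ▸ hd))
  have : d ⊓ himp a u = d := by rw [sh2, ← hdu, sh3, inf_top_eq]
  exact this ▸ inf_le_right

theorem disjoint_star (x : α) : Disjoint x (star x) := by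
  rw [disjoint_iff, star, sh1, inf_bot_eq]

end SemiHeyting

namespace DQD

variable {α : Type*} [DQD α]

theorem codisjoint_prime_prime_star (x : α) : Codisjoint (prime x) (prime (star x)) := by
  rw [codisjoint_iff, ← prime_inf, (disjoint_star x).eq_bot, prime_bot]

theorem star_prime_le_prime_star (x : α) : star (prime x) ≤ prime (star x) :=
  (disjoint_star (prime x)).symm.le_of_codisjoint (codisjoint_prime_prime_star x)

end DQD

theorem stmt15 {α : Type*} [DmsSt α] (x : α) :
    DQD.prime (DQD.prime (SemiHeyting.star x))
      ≤ DQD.prime (SemiHeyting.star (DQD.prime x)) :=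
  DQD.prime_antitone (DQD.star_prime_le_prime_star x)
end
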